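/- arXiv:2401.06820 — 9 statements merged into one kernel-verified Lean document; each statement's English description precedes it below -/
import Mathlib

section
/- Let Q ∈ ℝ^{n×n} and K ∈ ℝ^{m×n} with rank(K) = m (full row rank), and suppose uᵀQu > 0 for every nonzero u ∈ ℝ^n with Ku = 0. Then the (n+m)×(n+m) block matrix [[Q, Kᵀ], [K, 0]] is invertible. -/
open Matrix

/-- Let `Q ∈ ℝ^{n×n}` and `K ∈ ℝ^{m×n}` with full row rank `m`, and suppose
`uᵀQu > 0` for every nonzero `u` in the null space of `K`. Then the block matrix
`[[Q, Kᵀ], [K, 0]]` is invertible. -/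
theorem kkt_block_matrix_invertible {n m : ℕ}
    (Q : Matrix (Fin n) (Fin n) ℝ) (K : Matrix (Fin m) (Fin n) ℝ)
    (hK : K.rank = m)
    (hQ : ∀ u : Fin n → ℝ, u ≠ 0 → K.mulVec u = 0 → 0 < u ⬝ᵥ Q.mulVec u) :
    IsUnit (Matrix.fromBlocks Q Kᵀ K (0 : Matrix (Fin m) (Fin m) ℝ)) := by
  -- Kᵀ has injective mulVec
  have hKT : Function.Injective (Kᵀ.mulVec) := by
    rw [← Matrix.coe_mulVecLin, ← LinearMap.ker_eq_bot]
    rw [← Submodule.finrank_eq_zero (R := ℝ)]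
    have hrn := LinearMap.finrank_range_add_finrank_ker (Kᵀ.mulVecLin)
    have hr : Kᵀ.rank = m := by rw [Matrix.rank_transpose]; exact hK
    rw [Matrix.rank] at hr
    simp only [Module.finrank_fintype_fun_eq_card, Fintype.card_fin] at hrn
    omega
  rw [Matrix.isUnit_iff_isUnit_det, isUnit_iff_ne_zero]
  intro hdet
  obtain ⟨v, hv0, hv⟩ := (Matrix.exists_mulVec_eq_zero_iff).mpr hdet
  set u := v ∘ Sum.inl with hu
  set w := v ∘ Sum.inr with hw
  have hv' : v = Sum.elim u w := by funext x; cases x <;> rfl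
  rw [hv', Matrix.fromBlocks_mulVec] at hv
  have h1 : Q.mulVec u + Kᵀ.mulVec w = 0 := by
    funext i; exact congrFun hv (Sum.inl i)
  have h2 : K.mulVec u = 0 := by
    funext j
    have := congrFun hv (Sum.inr j)
    simpa using this
  have hu0 : u = 0 := by
    by_contra hne
    have hpos := hQ u hne h2
    have : u ⬝ᵥ Q.mulVec u = 0 := by
      have : Q.mulVec u = -(Kᵀ.mulVec w) := by
        rw [eq_neg_iff_add_eq_zero]; exact h1
      rw [this, dotProduct_neg, Matrix.dotProduct_mulVec, Matrix.vecMul_transpose, h2,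
        zero_dotProduct, neg_zero]
    linarith
  have hw0 : w = 0 := by
    apply hKT
    rw [Matrix.mulVec_zero]
    have := h1
    rw [hu0, Matrix.mulVec_zero, zero_add] at this
    exact this
  apply hv0
  rw [hv', hu0, hw0]
  ext x; cases x <;> rfl
end

section
/- Consider the QCQP: minimize (1/2)zᵀP₀z + q₀ᵀz over z ∈ ℝ^k subject to (1/2)zᵀP_iz + q_iᵀz + r_i ≤ 0 for i = 1,…,m_I and (1/2)zᵀD_jz + h_jᵀz + g_j = 0 for j = 1,…,m_E. Let (z*, ν*, λ*) be a KKT point, and suppose: (strict complementary slackness) for each i, ν_i* > 0 if (1/2)z*ᵀP_iz* + q_iᵀz* + r_i = 0 and (1/2)z*ᵀP_iz* + q_iᵀz* + r_i < 0 if ν_i* = 0; (linear constraint qualification) the vectors {P_iz* + q_i : i in the active set A} ∪ {D_jz* + h_j : j = 1,…,m_E} are linearly independent; (second-order sufficient condition) Q := P₀ + Σ_i ν_i*P_i + Σ_j λ_j*D_j satisfies uᵀQu > 0 for every nonzero u ∈ ℝ^k with (P_iz* + q_i)ᵀu = 0 for all i ∈ A and (D_jz* + h_j)ᵀu = 0 for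 all j. Then the KKT differential matrix M is invertible. -/
open Matrix BigOperators

/-- The KKT differential matrix `M` of the QCQP
`min (1/2)zᵀP₀z + q₀ᵀz  s.t.  (1/2)zᵀP_iz + q_iᵀz + r_i ≤ 0, (1/2)zᵀD_jz + h_jᵀz + g_j = 0`,
evaluated at a primal-dual point `(z, ν, λ)`.
Its first block row is `[Q, P_1z+q_1, …, P_{m_I}z+q_{m_I}, D_1z+h_1, …, D_{m_E}z+h_{m_E}]`
with `Q = P₀ + Σ_i ν_i P_i + Σ_j λ_j D_j`, its `i`-th inequality row is
`[ν_i (P_iz+q_i)ᵀ, ((1/2)zᵀP_iz + q_iᵀz + r_i)·e_iᵀ, 0]` and its `j`-th equality row is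
`[(D_jz+h_j)ᵀ, 0, 0]`. -/
noncomputable def kktMatrix {k mI mE : ℕ}
    (P0 : Matrix (Fin k) (Fin k) ℝ)
    (P : Fin mI → Matrix (Fin k) (Fin k) ℝ) (q : Fin mI → Fin k → ℝ) (r : Fin mI → ℝ)
    (D : Fin mE → Matrix (Fin k) (Fin k) ℝ) (h : Fin mE → Fin k → ℝ)
    (z : Fin k → ℝ) (ν : Fin mI → ℝ) (lam : Fin mE → ℝ) :
    Matrix (Fin k ⊕ (Fin mI ⊕ Fin mE)) (Fin k ⊕ (Fin mI ⊕ Fin mE)) ℝ :=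
  Matrix.fromBlocks
    (P0 + ∑ i, ν i • P i + ∑ j, lam j • D j)
    (Matrix.of fun a ij =>
      Sum.elim (fun i => ((P i).mulVec z + q i) a) (fun j => ((D j).mulVec z + h j) a) ij)
    (Matrix.of fun ij b =>
      Sum.elim (fun i => ν i * ((P i).mulVec z + q i) b)
        (fun j => ((D j).mulVec z + h j) b) ij)
    (Matrix.of fun ij ij' =>
      Sum.elim
        (fun i => Sum.elim
          (fun i' => if i' = i then (1 / 2) * (z ⬝ᵥ (P i).mulVec z) + q i ⬝ᵥ z + r i else 0)
          (fun _ => 0) ij')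
        (fun _ => 0) ij)


private lemma kkt_mulVec {k mI mE : ℕ}
    (P0 : Matrix (Fin k) (Fin k) ℝ)
    (P : Fin mI → Matrix (Fin k) (Fin k) ℝ) (q : Fin mI → Fin k → ℝ) (r : Fin mI → ℝ)
    (D : Fin mE → Matrix (Fin k) (Fin k) ℝ) (h : Fin mE → Fin k → ℝ)
    (z : Fin k → ℝ) (ν : Fin mI → ℝ) (lam : Fin mE → ℝ)
    (u : Fin k → ℝ) (α : Fin mI → ℝ) (β : Fin mE → ℝ) :
    kktMatrix P0 P q r D h z ν lam *ᵥ Sum.elim u (Sum.elim α β) =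
    Sum.elim
      ((P0 + ∑ i, ν i • P i + ∑ j, lam j • D j) *ᵥ u
        + (∑ i, α i • ((P i).mulVec z + q i)) + (∑ j, β j • ((D j).mulVec z + h j)))
      (Sum.elim
        (fun i => ν i * (((P i).mulVec z + q i) ⬝ᵥ u)
          + ((1 / 2) * (z ⬝ᵥ (P i).mulVec z) + q i ⬝ᵥ z + r i) * α i)
        (fun j => ((D j).mulVec z + h j) ⬝ᵥ u)) := by
  unfold kktMatrix
  rw [Matrix.fromBlocks_mulVec]
  funext c
  rcases c with a | (i | j)
  · simp only [Sum.elim_inl, Sum.elim_comp_inl, Sum.elim_comp_inr, Pi.add_apply,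
      Finset.sum_apply, Pi.smul_apply, smul_eq_mul, Matrix.mulVec, dotProduct,
      Matrix.of_apply, Fintype.sum_sum_type, Sum.elim_inr]
    rw [← add_assoc]
    congr 1
    · congr 1
      exact Finset.sum_congr rfl fun i _ => by ring
    · exact Finset.sum_congr rfl fun j _ => by ring
  · simp only [Sum.elim_inr, Sum.elim_inl, Sum.elim_comp_inl, Sum.elim_comp_inr, Pi.add_apply,
      Matrix.mulVec, dotProduct, Matrix.of_apply, Fintype.sum_sum_type,
      ite_mul, zero_mul, Finset.sum_const_zero, add_zero, Finset.sum_ite_eq',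
      Finset.mem_univ, if_true, Finset.mul_sum]
    congr 1
    exact Finset.sum_congr rfl fun b _ => by ring
  · simp only [Sum.elim_inr, Sum.elim_comp_inl, Sum.elim_comp_inr, Pi.add_apply,
      Matrix.mulVec, dotProduct, Matrix.of_apply, Fintype.sum_sum_type,
      Sum.elim_inl, zero_mul, Finset.sum_const_zero, add_zero]

/-- At a KKT point `(z*, ν*, λ*)` of the QCQP satisfying strict complementary
slackness, linear constraint qualification and the second-order sufficient condition, the
KKT differential matrix `M` is invertible. -/
theorem kkt_differential_matrix_invertible {k mI mE : ℕ}
    (P0 : Matrix (Fin k) (Fin k) ℝ) (q0 : Fin k → ℝ)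
    (P : Fin mI → Matrix (Fin k) (Fin k) ℝ) (q : Fin mI → Fin k → ℝ) (r : Fin mI → ℝ)
    (D : Fin mE → Matrix (Fin k) (Fin k) ℝ) (h : Fin mE → Fin k → ℝ) (gE : Fin mE → ℝ)
    (zs : Fin k → ℝ) (ν : Fin mI → ℝ) (lam : Fin mE → ℝ)
    (hP0 : P0.IsSymm) (hP : ∀ i, (P i).IsSymm) (hD : ∀ j, (D j).IsSymm)
    -- KKT point: stationarity
    (hstat : P0.mulVec zs + q0 + ∑ i, ν i • ((P i).mulVec zs + q i)
        + ∑ j, lam j • ((D j).mulVec zs + h j) = 0)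
    -- KKT point: primal feasibility
    (hineq : ∀ i, (1 / 2) * (zs ⬝ᵥ (P i).mulVec zs) + q i ⬝ᵥ zs + r i ≤ 0)
    (heq : ∀ j, (1 / 2) * (zs ⬝ᵥ (D j).mulVec zs) + h j ⬝ᵥ zs + gE j = 0)
    -- KKT point: dual feasibility and complementary slackness
    (hdual : ∀ i, 0 ≤ ν i)
    (hcs : ∀ i, ν i * ((1 / 2) * (zs ⬝ᵥ (P i).mulVec zs) + q i ⬝ᵥ zs + r i) = 0)
    -- strict complementary slackness
    (hscs₁ : ∀ i, (1 / 2) * (zs ⬝ᵥ (P i).mulVec zs) + q i ⬝ᵥ zs + r i = 0 → 0 < ν i)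
    (hscs₂ : ∀ i, ν i = 0 → (1 / 2) * (zs ⬝ᵥ (P i).mulVec zs) + q i ⬝ᵥ zs + r i < 0)
    -- linear constraint qualification
    (hlicq : LinearIndependent ℝ (Sum.elim
        (fun i : {i : Fin mI // (1 / 2) * (zs ⬝ᵥ (P i).mulVec zs) + q i ⬝ᵥ zs + r i = 0} =>
          (P i.1).mulVec zs + q i.1)
        (fun j : Fin mE => (D j).mulVec zs + h j)))
    -- second-order sufficient condition
    (hsosc : ∀ u : Fin k → ℝ, u ≠ 0 →
        (∀ i : Fin mI, (1 / 2) * (zs ⬝ᵥ (P i).mulVec zs) + q i ⬝ᵥ zs + r i = 0 →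
          ((P i).mulVec zs + q i) ⬝ᵥ u = 0) →
        (∀ j : Fin mE, ((D j).mulVec zs + h j) ⬝ᵥ u = 0) →
        0 < u ⬝ᵥ (P0 + ∑ i, ν i • P i + ∑ j, lam j • D j).mulVec u) :
    IsUnit (kktMatrix P0 P q r D h zs ν lam) := by
  classical
  set f : Fin mI → ℝ := fun i => (1 / 2) * (zs ⬝ᵥ (P i).mulVec zs) + q i ⬝ᵥ zs + r i with hfdef
  set Q : Matrix (Fin k) (Fin k) ℝ := P0 + ∑ i, ν i • P i + ∑ j, lam j • D j with hQdef
  set w : Fin mI → Fin k → ℝ := fun i => (P i).mulVec zs + q i with hwdef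
  set e : Fin mE → Fin k → ℝ := fun j => (D j).mulVec zs + h j with hedef
  rw [Matrix.isUnit_iff_isUnit_det, isUnit_iff_ne_zero]
  intro hdet
  rw [← Matrix.exists_mulVec_eq_zero_iff] at hdet
  obtain ⟨v, hv, hMv⟩ := hdet
  set u : Fin k → ℝ := fun a => v (Sum.inl a) with hudef
  set α : Fin mI → ℝ := fun i => v (Sum.inr (Sum.inl i)) with hαdef
  set β : Fin mE → ℝ := fun j => v (Sum.inr (Sum.inr j)) with hβdef
  have hveq : v = Sum.elim u (Sum.elim α β) := by
    funext c; rcases c with a | (i | j) <;> rfl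
  rw [hveq, kkt_mulVec] at hMv
  -- Equation from the inequality rows
  have E2 : ∀ i : Fin mI, ν i * (w i ⬝ᵥ u) + f i * α i = 0 := by
    intro i
    have := congrFun hMv (Sum.inr (Sum.inl i))
    simpa only [Sum.elim_inl, Sum.elim_inr, Pi.zero_apply] using this
  -- Equation from the equality rows
  have E3 : ∀ j : Fin mE, e j ⬝ᵥ u = 0 := by
    intro j
    have := congrFun hMv (Sum.inr (Sum.inr j))
    simpa only [Sum.elim_inl, Sum.elim_inr, Pi.zero_apply] using this
  -- Equation from the first block row, as a vector identity
  have E1 : Q.mulVec u + (∑ i, α i • w i) + (∑ j, β j • e j) = 0 := by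
    funext a
    have := congrFun hMv (Sum.inl a)
    simpa only [Sum.elim_inl, Pi.zero_apply] using this
  -- For inactive constraints, α vanishes
  have hα0 : ∀ i, f i ≠ 0 → α i = 0 := by
    intro i hfi
    have hν : ν i = 0 := by
      rcases mul_eq_zero.mp (hcs i) with h' | h'
      · exact h'
      · exact absurd h' hfi
    have := E2 i
    rw [hν, zero_mul, zero_add] at this
    exact (mul_eq_zero.mp this).resolve_left hfi
  -- For active constraints, the gradient is orthogonal to u
  have hact : ∀ i, f i = 0 → w i ⬝ᵥ u = 0 := by
    intro i hfi
    have hν := hscs₁ i hfi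
    have := E2 i
    rw [hfi, zero_mul, add_zero] at this
    exact (mul_eq_zero.mp this).resolve_left (ne_of_gt hν)
  -- u must be zero by the second-order condition
  have hu0 : u = 0 := by
    by_contra hu
    have hpos := hsosc u hu (fun i hfi => hact i hfi) E3
    have hz : u ⬝ᵥ Q.mulVec u = 0 := by
      have hdot := congrArg (fun x => u ⬝ᵥ x) E1
      simp only [dotProduct_add, dotProduct_zero] at hdot
      have hs1 : u ⬝ᵥ (∑ i, α i • w i) = ∑ i, α i * (u ⬝ᵥ w i) := by
        simp only [dotProduct, Finset.sum_apply, Pi.smul_apply, smul_eq_mul, Finset.mul_sum]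
        rw [Finset.sum_comm]
        exact Finset.sum_congr rfl fun i _ => Finset.sum_congr rfl fun a _ => by ring
      have hs2 : u ⬝ᵥ (∑ j, β j • e j) = ∑ j, β j * (u ⬝ᵥ e j) := by
        simp only [dotProduct, Finset.sum_apply, Pi.smul_apply, smul_eq_mul, Finset.mul_sum]
        rw [Finset.sum_comm]
        exact Finset.sum_congr rfl fun j _ => Finset.sum_congr rfl fun a _ => by ring
      rw [hs1, hs2] at hdot
      have h1 : ∀ i, α i * (u ⬝ᵥ w i) = 0 := by
        intro i
        by_cases hfi : f i = 0
        · rw [dotProduct_comm, hact i hfi, mul_zero]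
        · rw [hα0 i hfi, zero_mul]
      have h2 : ∀ j, β j * (u ⬝ᵥ e j) = 0 := by
        intro j
        rw [dotProduct_comm, E3 j, mul_zero]
      rw [Finset.sum_congr rfl (fun i _ => h1 i), Finset.sum_congr rfl (fun j _ => h2 j)] at hdot
      simpa using hdot
    exact absurd hz (ne_of_gt hpos)
  -- Now the first equation gives a vanishing linear combination of the gradients
  have E1' : (∑ i, α i • w i) + (∑ j, β j • e j) = 0 := by
    have := E1
    rw [hu0, Matrix.mulVec_zero, zero_add] at this
    exact this
  -- Apply linear independence
  have hg : ∀ c : {i : Fin mI // f i = 0} ⊕ Fin mE,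
      (Sum.elim (fun i : {i : Fin mI // f i = 0} => α i.1) β) c = 0 := by
    have key := Fintype.linearIndependent_iff.mp hlicq
      (Sum.elim (fun i : {i : Fin mI // f i = 0} => α i.1) β)
    apply key
    rw [Fintype.sum_sum_type]
    simp only [Sum.elim_inl, Sum.elim_inr]
    have hsub : (∑ i : {i : Fin mI // f i = 0}, α i.1 • w i.1) = ∑ i, α i • w i := by
      rw [← Finset.sum_filter_of_ne (p := fun i => f i = 0)
        (f := fun i => α i • w i) (by
          intro i _ hne
          by_contra hfi
          exact hne (by simp [hα0 i hfi]))]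
      rw [← Finset.sum_subtype (Finset.univ.filter (fun i => f i = 0))
        (fun i => by simp) (fun i => α i • w i)]
    rw [hsub]
    exact E1'
  -- Conclude v = 0, contradiction
  apply hv
  rw [hveq]
  funext c
  rcases c with a | (i | j)
  · simp [hu0]
  · simp only [Sum.elim_inr, Sum.elim_inl, Pi.zero_apply]
    by_cases hfi : f i = 0
    · exact hg (Sum.inl ⟨i, hfi⟩)
    · exact hα0 i hfi
  · exact hg (Sum.inr j)
end

section
/- Consider the QCQP: minimize (1/2)zᵀP₀z + q₀ᵀz over z ∈ ℝ^k subject to (1/2)zᵀP_iz + q_iᵀz + r_i ≤ 0 for i = 1,…,m_I and (1/2)zᵀD_jz + h_jᵀz + g_j = 0 for j = 1,…,m_E. Let (z*, ν*, λ*) be a KKT point satisfying strict complementary slackness, i.e. ν_i* > 0 for each active inequality constraint and (1/2)z*ᵀP_iz* + q_iᵀz* + r_i < 0 whenever ν_i* = 0. Then the KKT differential matrix M is invertible if and only if the reduced matrix M_A, obtained from M by deleting the rows and columns indexed by the inactive inequality constraints, is invertible. -/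
open Matrix BigOperators

/-- At a KKT point `(z*, ν*, λ*)` of the QCQP satisfying strict complementary
slackness, the KKT differential matrix `M` is invertible if and only if the reduced matrix
`M_A`, obtained from `M` by deleting the rows and columns indexed by the inactive inequality
constraints (i.e. keeping the primal block, the active inequality constraints and the
equality constraints), is invertible. -/
theorem kkt_matrix_invertible_iff_reduced {k mI mE : ℕ}
    (P0 : Matrix (Fin k) (Fin k) ℝ) (q0 : Fin k → ℝ)
    (P : Fin mI → Matrix (Fin k) (Fin k) ℝ) (q : Fin mI → Fin k → ℝ) (r : Fin mI → ℝ)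
    (D : Fin mE → Matrix (Fin k) (Fin k) ℝ) (h : Fin mE → Fin k → ℝ) (gE : Fin mE → ℝ)
    (zs : Fin k → ℝ) (ν : Fin mI → ℝ) (lam : Fin mE → ℝ)
    (hP0 : P0.IsSymm) (hP : ∀ i, (P i).IsSymm) (hD : ∀ j, (D j).IsSymm)
    -- KKT point: stationarity
    (hstat : P0.mulVec zs + q0 + ∑ i, ν i • ((P i).mulVec zs + q i)
        + ∑ j, lam j • ((D j).mulVec zs + h j) = 0)
    -- KKT point: primal feasibility
    (hineq : ∀ i, (1 / 2) * (zs ⬝ᵥ (P i).mulVec zs) + q i ⬝ᵥ zs + r i ≤ 0)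
    (heq : ∀ j, (1 / 2) * (zs ⬝ᵥ (D j).mulVec zs) + h j ⬝ᵥ zs + gE j = 0)
    -- KKT point: dual feasibility and complementary slackness
    (hdual : ∀ i, 0 ≤ ν i)
    (hcs : ∀ i, ν i * ((1 / 2) * (zs ⬝ᵥ (P i).mulVec zs) + q i ⬝ᵥ zs + r i) = 0)
    -- strict complementary slackness
    (hscs₁ : ∀ i, (1 / 2) * (zs ⬝ᵥ (P i).mulVec zs) + q i ⬝ᵥ zs + r i = 0 → 0 < ν i)
    (hscs₂ : ∀ i, ν i = 0 → (1 / 2) * (zs ⬝ᵥ (P i).mulVec zs) + q i ⬝ᵥ zs + r i < 0) :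
    IsUnit (kktMatrix P0 P q r D h zs ν lam) ↔
      IsUnit ((kktMatrix P0 P q r D h zs ν lam).submatrix
        (Sum.map (id : Fin k → Fin k)
          (Sum.map
            (Subtype.val :
              {i : Fin mI // (1 / 2) * (zs ⬝ᵥ (P i).mulVec zs) + q i ⬝ᵥ zs + r i = 0} → Fin mI)
            (id : Fin mE → Fin mE)))
        (Sum.map (id : Fin k → Fin k)
          (Sum.map
            (Subtype.val :
              {i : Fin mI // (1 / 2) * (zs ⬝ᵥ (P i).mulVec zs) + q i ⬝ᵥ zs + r i = 0} → Fin mI)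
            (id : Fin mE → Fin mE)))) := by
  classical
  set c : Fin mI → ℝ := fun i => (1 / 2) * (zs ⬝ᵥ (P i).mulVec zs) + q i ⬝ᵥ zs + r i with hc
  set M := kktMatrix P0 P q r D h zs ν lam with hM
  -- the reindexing equivalence
  let e : (Fin k ⊕ ({i : Fin mI // c i = 0} ⊕ Fin mE)) ⊕ {i : Fin mI // ¬ c i = 0}
      ≃ Fin k ⊕ (Fin mI ⊕ Fin mE) :=
  { toFun := Sum.elim (Sum.map id (Sum.map Subtype.val id))
      (fun i => Sum.inr (Sum.inl i.1))
    invFun := fun x => match x with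
      | Sum.inl a => Sum.inl (Sum.inl a)
      | Sum.inr (Sum.inl i) =>
          if h : c i = 0 then Sum.inl (Sum.inr (Sum.inl ⟨i, h⟩)) else Sum.inr ⟨i, h⟩
      | Sum.inr (Sum.inr j) => Sum.inl (Sum.inr (Sum.inr j))
    left_inv := by
      rintro ((a | (⟨i, hi⟩ | j)) | ⟨i, hi⟩)
      · rfl
      · simp [hi]
      · rfl
      · simp [hi]
    right_inv := by
      rintro (a | (i | j))
      · rfl
      · by_cases hi : c i = 0 <;> simp [hi]
      · rfl }
  set N := M.submatrix e e with hN
  -- inactive multipliers vanish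
  have hν0 : ∀ i : Fin mI, ¬ c i = 0 → ν i = 0 := fun i hi => by
    rcases mul_eq_zero.mp (hcs i) with h' | h'
    · exact h'
    · exact absurd h' hi
  -- lower-left block of N is zero
  have h21 : N.toBlocks₂₁ = 0 := by
    ext i x
    have hνi := hν0 i.1 i.2
    rcases x with a | (i' | j)
    · simp [Matrix.toBlocks₂₁, hN, hM, kktMatrix, e, hνi]
    · have : i'.1 ≠ i.1 := fun hh => i.2 (hh ▸ i'.2)
      simp [Matrix.toBlocks₂₁, hN, hM, kktMatrix, e, this]
    · simp [Matrix.toBlocks₂₁, hN, hM, kktMatrix, e]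
  -- lower-right block of N is a diagonal matrix with nonzero entries
  have h22 : N.toBlocks₂₂ = Matrix.diagonal (fun i : {i : Fin mI // ¬ c i = 0} => c i.1) := by
    ext i i'
    by_cases hii : i = i'
    · subst hii
      simp [Matrix.toBlocks₂₂, hN, hM, kktMatrix, e, Matrix.diagonal, hc]
    · have : i'.1 ≠ i.1 := fun hh => hii (Subtype.ext hh.symm)
      simp [Matrix.toBlocks₂₂, hN, hM, kktMatrix, e, Matrix.diagonal, this, hii]
  have hdet22 : IsUnit N.toBlocks₂₂.det := by
    rw [h22, Matrix.det_diagonal]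
    exact (Finset.prod_ne_zero_iff.mpr (fun i _ => i.2)).isUnit
  -- upper-left block of N is the reduced matrix
  have h11 : N.toBlocks₁₁ = M.submatrix
      (Sum.map (id : Fin k → Fin k)
        (Sum.map (Subtype.val : {i : Fin mI // c i = 0} → Fin mI) (id : Fin mE → Fin mE)))
      (Sum.map (id : Fin k → Fin k)
        (Sum.map (Subtype.val : {i : Fin mI // c i = 0} → Fin mI) (id : Fin mE → Fin mE))) := by
    ext x y; rfl
  have hdetN : M.det = N.toBlocks₁₁.det * N.toBlocks₂₂.det := by
    have := Matrix.det_submatrix_equiv_self e M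
    rw [← hN] at this
    rw [← this]
    conv_lhs => rw [← Matrix.fromBlocks_toBlocks N, h21]
    exact Matrix.det_fromBlocks_zero₂₁ _ _ _
  rw [Matrix.isUnit_iff_isUnit_det, Matrix.isUnit_iff_isUnit_det, ← h11, hdetN,
    IsUnit.mul_iff]
  exact ⟨fun ⟨h1, _⟩ => h1, fun h1 => ⟨h1, hdet22⟩⟩
end

section
/- Let G : (ℝ^k × ℝ^{m_I} × ℝ^{m_E}) × (ℝ^k × ℝ^{m_I} × ℝ^{m_E}) → ℝ^{k+m_I+m_E} be the parameterized KKT residual map G(θ; z, ν, λ) with parameter θ = (q₀, r, g): G(θ; z, ν, λ) = (P₀z + q₀ + Σ_i ν_i(P_iz + q_i) + Σ_j λ_j(D_jz + h_j); (ν_i·((1/2)zᵀP_iz + q_iᵀz + r_i))_{i}; ((1/2)zᵀD_jz + h_jᵀz + g_j)_{j}). Suppose G(θ⁰; z*, ν*, λ*) = 0 and the KKT differential matrix M at (z*, ν*, λ*) with parameters θ⁰ is invertible. Then there exist a neighborhood U of θ⁰ and a differentiable map φ : U → ℝ^k × ℝ^{m_I} × ℝ^{m_E} such that φ(θ⁰)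 = (z*, ν*, λ*) and G(θ; φ(θ)) = 0 for all θ ∈ U. -/
open Matrix BigOperators

/-- The KKT residual map `G(θ; z, ν, λ)` of the QCQP, parameterized by
`θ = (q₀, r, g)`: the stationarity residual, the complementary-slackness residuals
`ν_i·((1/2)zᵀP_iz + q_iᵀz + r_i)` and the equality residuals
`(1/2)zᵀD_jz + h_jᵀz + g_j`. -/
noncomputable def kktResidualParam {k mI mE : ℕ}
    (P0 : Matrix (Fin k) (Fin k) ℝ)
    (P : Fin mI → Matrix (Fin k) (Fin k) ℝ) (q : Fin mI → Fin k → ℝ)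
    (D : Fin mE → Matrix (Fin k) (Fin k) ℝ) (h : Fin mE → Fin k → ℝ)
    (θ : (Fin k → ℝ) × (Fin mI → ℝ) × (Fin mE → ℝ))
    (p : (Fin k → ℝ) × (Fin mI → ℝ) × (Fin mE → ℝ)) :
    (Fin k ⊕ (Fin mI ⊕ Fin mE)) → ℝ :=
  Sum.elim
    (P0.mulVec p.1 + θ.1 + ∑ i, p.2.1 i • ((P i).mulVec p.1 + q i)
      + ∑ j, p.2.2 j • ((D j).mulVec p.1 + h j))
    (Sum.elim
      (fun i => p.2.1 i * ((1 / 2) * (p.1 ⬝ᵥ (P i).mulVec p.1) + q i ⬝ᵥ p.1 + θ.2.1 i))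
      (fun j => (1 / 2) * (p.1 ⬝ᵥ (D j).mulVec p.1) + h j ⬝ᵥ p.1 + θ.2.2 j))

/-!
The residual `G(θ; p)` is polynomial in `(θ, p)`, hence `C¹`. Once `p = (z, ν, λ)` is stacked into
a single vector, the partial derivative of `G` in `p` at `(θ; p)` is `v ↦ M v`, where `M` is the
KKT differential matrix at `p`: symmetry of `P_i` and `D_j` makes the derivative of
`(1/2) zᵀ A z` equal to `(A z)ᵀ`, which is the form of the rows of `M`. So the invertibility of `M`
is exactly the hypothesis of the implicit function theorem, and the implicit function is `C¹`,
hence differentiable, near `θ⁰`.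
-/

section Calculus

variable {E : Type*} [NormedAddCommGroup E] [NormedSpace ℝ E] {m n : Type*} [Fintype n]

noncomputable def Matrix.mulVecCLM (A : Matrix m n ℝ) : (n → ℝ) →L[ℝ] (m → ℝ) :=
  LinearMap.toContinuousLinearMap A.mulVecLin

@[simp] theorem Matrix.mulVecCLM_apply (A : Matrix m n ℝ) (v : n → ℝ) :
    A.mulVecCLM v = A *ᵥ v :=
  rfl

theorem Matrix.isInvertible_mulVecCLM [DecidableEq n] {A : Matrix n n ℝ} (hA : IsUnit A) :
    A.mulVecCLM.IsInvertible :=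
  ⟨(A.toLinearEquiv' hA.invertible).toContinuousLinearEquiv, rfl⟩

noncomputable def Matrix.dotProductCLM (w : n → ℝ) : (n → ℝ) →L[ℝ] ℝ :=
  LinearMap.toContinuousLinearMap (dotProductBilin ℝ ℝ w)

@[simp] theorem Matrix.dotProductCLM_apply (w v : n → ℝ) : dotProductCLM w v = w ⬝ᵥ v :=
  rfl

theorem Matrix.IsSymm.dotProduct_mulVec_comm {A : Matrix n n ℝ} (hA : A.IsSymm) (v w : n → ℝ) :
    v ⬝ᵥ A *ᵥ w = A *ᵥ v ⬝ᵥ w := by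
  rw [dotProduct_mulVec, ← mulVec_transpose, hA.eq]

variable {x : E}

theorem HasFDerivAt.matrix_mulVec [Fintype m] {f : E → n → ℝ} {f' : E →L[ℝ] n → ℝ}
    (A : Matrix m n ℝ) (hf : HasFDerivAt f f' x) :
    HasFDerivAt (fun y => A *ᵥ f y) (A.mulVecCLM.comp f') x :=
  A.mulVecCLM.hasFDerivAt.comp x hf

theorem HasFDerivAt.dotProduct {f g : E → n → ℝ} {f' g' : E →L[ℝ] n → ℝ}
    (hf : HasFDerivAt f f' x) (hg : HasFDerivAt g g' x) :
    HasFDerivAt (fun y => f y ⬝ᵥ g y)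
      ((dotProductCLM (f x)).comp g' + (dotProductCLM (g x)).comp f') x := by
  refine (HasFDerivAt.fun_sum (u := Finset.univ) fun i _ =>
    (hasFDerivAt_pi'.1 hf i).mul (hasFDerivAt_pi'.1 hg i)).congr_fderiv
    (ContinuousLinearMap.ext fun v => ?_)
  simp only [_root_.add_apply, _root_.sum_apply, _root_.smul_apply, ContinuousLinearMap.comp_apply,
    ContinuousLinearMap.proj_apply, smul_eq_mul, dotProductCLM_apply]
  exact Finset.sum_add_distrib

theorem HasFDerivAt.quadratic {f : E → n → ℝ} {f' : E →L[ℝ] n → ℝ} {A : Matrix n n ℝ}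
    (hA : A.IsSymm) (b : n → ℝ) (c : ℝ) (hf : HasFDerivAt f f' x) :
    HasFDerivAt (fun y => (1 / 2) * (f y ⬝ᵥ A *ᵥ f y) + b ⬝ᵥ f y + c)
      ((dotProductCLM (A *ᵥ f x + b)).comp f') x := by
  refine ((((hf.dotProduct (hf.matrix_mulVec A)).const_mul (1 / 2)).add
    ((hasFDerivAt_const b x).dotProduct hf)).add_const c).congr_fderiv
    (ContinuousLinearMap.ext fun v => ?_)
  simp only [_root_.add_apply, _root_.smul_apply, ContinuousLinearMap.comp_apply,
    ContinuousLinearMap.comp_zero, mulVecCLM_apply,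
    dotProductCLM_apply, smul_eq_mul, add_dotProduct, hA.dotProduct_mulVec_comm, add_zero]
  ring

end Calculus

section ImplicitFunction

variable {𝕜 : Type*} [RCLike 𝕜]
  {E₁ : Type*} [NormedAddCommGroup E₁] [NormedSpace 𝕜 E₁] [CompleteSpace E₁]
  {E₂ : Type*} [NormedAddCommGroup E₂] [NormedSpace 𝕜 E₂] [CompleteSpace E₂]
  {F : Type*} [NormedAddCommGroup F] [NormedSpace 𝕜 F] [CompleteSpace F]

theorem ContDiffAt.exists_isOpen_differentiableOn_implicit {f : E₁ × E₂ → F} {x₀ : E₁} {y₀ : E₂}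
    (hf : ContDiffAt 𝕜 1 f (x₀, y₀)) {f₂' : E₂ →L[𝕜] F}
    (hf₂ : HasFDerivAt (fun y => f (x₀, y)) f₂' y₀) (hf₂' : f₂'.IsInvertible) :
    ∃ U : Set E₁, IsOpen U ∧ x₀ ∈ U ∧ ∃ φ : E₁ → E₂, DifferentiableOn 𝕜 φ U ∧ φ x₀ = y₀ ∧
      ∀ x ∈ U, f (x, φ x) = f (x₀, y₀) := by
  have hpartial : fderiv 𝕜 f (x₀, y₀) ∘L .inr 𝕜 E₁ E₂ = f₂' :=
    ((hf.differentiableAt one_ne_zero).hasFDerivAt.comp y₀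
      (hasFDerivAt_prodMk_right x₀ y₀)).unique hf₂
  have hinv := hpartial ▸ hf₂'
  obtain ⟨U, hU, hUo, hx₀⟩ := eventually_nhds_iff.1 <|
    ((hf.contDiffAt_implicitFunction one_ne_zero hinv).eventually (by simp)).and
      (hf.eventually_apply_implicitFunction one_ne_zero hinv)
  exact ⟨U, hUo, hx₀, hf.implicitFunction one_ne_zero hinv,
    fun x hx => ((hU x hx).1.differentiableAt one_ne_zero).differentiableWithinAt,
    hf.implicitFunction_apply_self one_ne_zero hinv, fun x hx => (hU x hx).2⟩

end ImplicitFunction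

def stackEquiv (α β γ : Type*) : ((α → ℝ) × (β → ℝ) × (γ → ℝ)) ≃L[ℝ] (α ⊕ β ⊕ γ → ℝ) :=
  ((ContinuousLinearEquiv.refl ℝ _).prodCongr
    (ContinuousLinearEquiv.sumPiEquivProdPi ℝ β γ fun _ => ℝ).symm).trans
    (ContinuousLinearEquiv.sumPiEquivProdPi ℝ α (β ⊕ γ) fun _ => ℝ).symm

@[simp] theorem stackEquiv_apply {α β γ : Type*} (p : (α → ℝ) × (β → ℝ) × (γ → ℝ)) :
    stackEquiv α β γ p = Sum.elim p.1 (Sum.elim p.2.1 p.2.2) := by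
  ext (a | b | c) <;> rfl

section KKT

variable {k mI mE : ℕ} (P0 : Matrix (Fin k) (Fin k) ℝ)
  (P : Fin mI → Matrix (Fin k) (Fin k) ℝ) (q : Fin mI → Fin k → ℝ)
  (D : Fin mE → Matrix (Fin k) (Fin k) ℝ) (h : Fin mE → Fin k → ℝ)

local notation "𝕍" => (Fin k → ℝ) × (Fin mI → ℝ) × (Fin mE → ℝ)

theorem kktMatrix_mulVec_sumElim (r : Fin mI → ℝ) (z : Fin k → ℝ) (ν : Fin mI → ℝ)
    (lam : Fin mE → ℝ) (dz : Fin k → ℝ) (dν : Fin mI → ℝ) (dlam : Fin mE → ℝ) :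
    kktMatrix P0 P q r D h z ν lam *ᵥ Sum.elim dz (Sum.elim dν dlam) =
      Sum.elim
        ((P0 + ∑ i, ν i • P i + ∑ j, lam j • D j) *ᵥ dz
          + (∑ i, dν i • (P i *ᵥ z + q i) + ∑ j, dlam j • (D j *ᵥ z + h j)))
        (Sum.elim
          (fun i => ν i * ((P i *ᵥ z + q i) ⬝ᵥ dz)
            + ((1 / 2) * (z ⬝ᵥ P i *ᵥ z) + q i ⬝ᵥ z + r i) * dν i)
          (fun j => (D j *ᵥ z + h j) ⬝ᵥ dz)) := by
  rw [kktMatrix, fromBlocks_mulVec, Sum.elim_comp_inl, Sum.elim_comp_inr]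
  refine congrArg₂ Sum.elim (congrArg _ ?_) ?_
  · ext a
    simp [mulVec, dotProduct, Fintype.sum_sum_type, Finset.sum_apply, mul_add, mul_comm]
  · ext (i | j)
    · simp [mulVec, dotProduct, Fintype.sum_sum_type, Finset.mul_sum, mul_comm, mul_left_comm]
    · simp [mulVec, dotProduct, mul_comm]

theorem contDiff_kktResidualParam {n : WithTop ℕ∞} :
    ContDiff ℝ n (fun u : 𝕍 × 𝕍 => kktResidualParam P0 P q D h u.1 u.2) := by
  refine contDiff_pi.2 fun s => ?_
  rcases s with a | i | j <;>
    simp only [kktResidualParam, mulVec, dotProduct, smul_add, Sum.elim_inl, Sum.elim_inr,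
      Pi.add_apply, Finset.sum_apply, Pi.smul_apply, smul_eq_mul] <;>
    fun_prop

theorem hasFDerivAt_kktResidualParam (hP : ∀ i, (P i).IsSymm) (hD : ∀ j, (D j).IsSymm)
    (θ p : 𝕍) :
    HasFDerivAt (kktResidualParam P0 P q D h θ)
      ((kktMatrix P0 P q θ.2.1 D h p.1 p.2.1 p.2.2).mulVecCLM.comp
        (stackEquiv (Fin k) (Fin mI) (Fin mE) : 𝕍 →L[ℝ] _)) p := by
  have hz : HasFDerivAt (fun p : 𝕍 => p.1) (ContinuousLinearMap.fst ℝ _ _) p := hasFDerivAt_fst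
  have hν : HasFDerivAt (fun p : 𝕍 => p.2.1)
      ((ContinuousLinearMap.fst ℝ _ _).comp (ContinuousLinearMap.snd ℝ _ _)) p :=
    hasFDerivAt_snd.fst
  have hlam : HasFDerivAt (fun p : 𝕍 => p.2.2)
      ((ContinuousLinearMap.snd ℝ _ _).comp (ContinuousLinearMap.snd ℝ _ _)) p :=
    hasFDerivAt_snd.snd
  have hstationarity : HasFDerivAt (fun p : 𝕍 => P0 *ᵥ p.1 + θ.1 + ∑ i, p.2.1 i • (P i *ᵥ p.1 + q i)
      + ∑ j, p.2.2 j • (D j *ᵥ p.1 + h j)) _ p :=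
    (((hz.matrix_mulVec P0).add_const θ.1).add (HasFDerivAt.fun_sum fun i _ =>
      (hasFDerivAt_pi'.1 hν i).smul ((hz.matrix_mulVec (P i)).add_const (q i)))).add
      (HasFDerivAt.fun_sum fun j _ =>
        (hasFDerivAt_pi'.1 hlam j).smul ((hz.matrix_mulVec (D j)).add_const (h j)))
  refine hasFDerivAt_pi'' ?_
  rintro (a | i | j)
  · refine (hasFDerivAt_pi'.1 hstationarity a).congr_fderiv (ContinuousLinearMap.ext fun dp => ?_)
    simp only [ContinuousLinearMap.comp_apply, _root_.add_apply, _root_.sum_apply,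
      _root_.smul_apply, ContinuousLinearMap.smulRight_apply, ContinuousLinearMap.coe_fst',
      ContinuousLinearMap.coe_snd', ContinuousLinearMap.proj_apply, ContinuousLinearEquiv.coe_coe,
      mulVecCLM_apply, stackEquiv_apply, kktMatrix_mulVec_sumElim, Sum.elim_inl, add_mulVec,
      sum_mulVec, smul_mulVec, Pi.add_apply, Finset.sum_apply, Pi.smul_apply, smul_eq_mul,
      Finset.sum_add_distrib]
    ring
  · refine ((hasFDerivAt_pi'.1 hν i).mul (hz.quadratic (hP i) (q i) (θ.2.1 i))).congr_fderiv
      (ContinuousLinearMap.ext fun dp => ?_)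
    simp [kktMatrix_mulVec_sumElim]
  · refine (hz.quadratic (hD j) (h j) (θ.2.2 j)).congr_fderiv
      (ContinuousLinearMap.ext fun dp => ?_)
    simp [kktMatrix_mulVec_sumElim]

end KKT

theorem kkt_implicit_function_general {k mI mE : ℕ}
    (P0 : Matrix (Fin k) (Fin k) ℝ)
    (P : Fin mI → Matrix (Fin k) (Fin k) ℝ) (q : Fin mI → Fin k → ℝ)
    (D : Fin mE → Matrix (Fin k) (Fin k) ℝ) (h : Fin mE → Fin k → ℝ)
    (hP : ∀ i, (P i).IsSymm) (hD : ∀ j, (D j).IsSymm)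
    (θ0 : (Fin k → ℝ) × (Fin mI → ℝ) × (Fin mE → ℝ))
    (zs : Fin k → ℝ) (ν : Fin mI → ℝ) (lam : Fin mE → ℝ)
    (hroot : kktResidualParam P0 P q D h θ0 (zs, ν, lam) = 0)
    (hM : IsUnit (kktMatrix P0 P q θ0.2.1 D h zs ν lam)) :
    ∃ U : Set ((Fin k → ℝ) × (Fin mI → ℝ) × (Fin mE → ℝ)), IsOpen U ∧ θ0 ∈ U ∧
      ∃ φ : ((Fin k → ℝ) × (Fin mI → ℝ) × (Fin mE → ℝ)) →
          ((Fin k → ℝ) × (Fin mI → ℝ) × (Fin mE → ℝ)),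
        DifferentiableOn ℝ φ U ∧ φ θ0 = (zs, ν, lam) ∧
          ∀ θ ∈ U, kktResidualParam P0 P q D h θ (φ θ) = 0 := by
  obtain ⟨U, hU, hθ0, φ, hφ, hφθ0, hφroot⟩ :=
    (contDiff_kktResidualParam P0 P q D h).contDiffAt.exists_isOpen_differentiableOn_implicit
      (hasFDerivAt_kktResidualParam P0 P q D h hP hD θ0 (zs, ν, lam))
      ((isInvertible_mulVecCLM hM).comp ContinuousLinearMap.isInvertible_equiv)
  exact ⟨U, hU, hθ0, φ, hφ, hφθ0, fun θ hθ => (hφroot θ hθ).trans hroot⟩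

/-- If `G(θ⁰; z*, ν*, λ*) = 0` and the KKT differential matrix `M` at
`(z*, ν*, λ*)` (with parameters `θ⁰`) is invertible, then there exist a neighborhood `U`
of `θ⁰` and a differentiable map `φ : U → ℝ^k × ℝ^{m_I} × ℝ^{m_E}` such that
`φ(θ⁰) = (z*, ν*, λ*)` and `G(θ; φ(θ)) = 0` for all `θ ∈ U`. -/
theorem kkt_implicit_function {k mI mE : ℕ}
    (P0 : Matrix (Fin k) (Fin k) ℝ)
    (P : Fin mI → Matrix (Fin k) (Fin k) ℝ) (q : Fin mI → Fin k → ℝ)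
    (D : Fin mE → Matrix (Fin k) (Fin k) ℝ) (h : Fin mE → Fin k → ℝ)
    (hP0 : P0.IsSymm) (hP : ∀ i, (P i).IsSymm) (hD : ∀ j, (D j).IsSymm)
    (θ0 : (Fin k → ℝ) × (Fin mI → ℝ) × (Fin mE → ℝ))
    (zs : Fin k → ℝ) (ν : Fin mI → ℝ) (lam : Fin mE → ℝ)
    (hroot : kktResidualParam P0 P q D h θ0 (zs, ν, lam) = 0)
    (hM : IsUnit (kktMatrix P0 P q θ0.2.1 D h zs ν lam)) :
    ∃ U : Set ((Fin k → ℝ) × (Fin mI → ℝ) × (Fin mE → ℝ)), IsOpen U ∧ θ0 ∈ U ∧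
      ∃ φ : ((Fin k → ℝ) × (Fin mI → ℝ) × (Fin mE → ℝ)) →
          ((Fin k → ℝ) × (Fin mI → ℝ) × (Fin mE → ℝ)),
        DifferentiableOn ℝ φ U ∧ φ θ0 = (zs, ν, lam) ∧
          ∀ θ ∈ U, kktResidualParam P0 P q D h θ (φ θ) = 0 :=
  kkt_implicit_function_general P0 P q D h hP hD θ0 zs ν lam hroot hM
end

section
/- Let M ∈ ℝ^{(k+m_I+m_E)×(k+m_I+m_E)} be invertible, let g ∈ ℝ^k, z* ∈ ℝ^k, and define (d_z, d_ν, d_λ) = −(Mᵀ)⁻¹·(g, 0, 0). Then for every matrix dP₀ ∈ ℝ^{k×k}, if (dz, dν, dλ) is the unique solution of M·(dz, dν, dλ) = −(dP₀·z*, 0, 0), then gᵀdz = d_zᵀ(dP₀·z*). (This expresses the backward-pass formula for the quadratic objective matrix P₀: the gradient of the downstream loss with respect to P₀ is the outer product of d_z and z*.) -/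
open Matrix

lemma sum_dot_aux {k m : Type*} [Fintype k] [Fintype m] (a : k → ℝ) (v : k ⊕ m → ℝ) :
    Sum.elim a (0 : m → ℝ) ⬝ᵥ v = a ⬝ᵥ (v ∘ Sum.inl) := by
  simp [dotProduct, Fintype.sum_sum_type]

/-- Backward-pass formula for the quadratic objective matrix `P₀`:
with `(d_z, d_ν, d_λ) = −(Mᵀ)⁻¹·(g, 0, 0)`, if `M·(dz, dν, dλ) = −(dP₀·z*, 0, 0)` then
`gᵀdz = d_zᵀ(dP₀·z*)`. -/
theorem qcqp_backward_P0 {k mI mE : ℕ}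
    (M : Matrix (Fin k ⊕ (Fin mI ⊕ Fin mE)) (Fin k ⊕ (Fin mI ⊕ Fin mE)) ℝ)
    (hM : IsUnit M) (g : Fin k → ℝ) (zs : Fin k → ℝ)
    (d : (Fin k ⊕ (Fin mI ⊕ Fin mE)) → ℝ)
    (hd : d = -(Mᵀ)⁻¹.mulVec (Sum.elim g (0 : (Fin mI ⊕ Fin mE) → ℝ)))
    (dP0 : Matrix (Fin k) (Fin k) ℝ)
    (x : (Fin k ⊕ (Fin mI ⊕ Fin mE)) → ℝ)
    (hx : M.mulVec x = -(Sum.elim (dP0.mulVec zs) (0 : (Fin mI ⊕ Fin mE) → ℝ))) :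
    g ⬝ᵥ (x ∘ Sum.inl) = (d ∘ Sum.inl) ⬝ᵥ dP0.mulVec zs := by
  have hdet : IsUnit Mᵀ.det := by
    rw [Matrix.det_transpose]
    exact (Matrix.isUnit_iff_isUnit_det M).mp hM
  have hMT : Mᵀ.mulVec d = -(Sum.elim g (0 : (Fin mI ⊕ Fin mE) → ℝ)) := by
    subst hd
    rw [Matrix.mulVec_neg, Matrix.mulVec_mulVec, Matrix.mul_nonsing_inv _ hdet,
      Matrix.one_mulVec]
  have key : d ⬝ᵥ M.mulVec x = Mᵀ.mulVec d ⬝ᵥ x := by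
    rw [Matrix.dotProduct_mulVec, ← Matrix.mulVec_transpose]
  rw [hx, hMT] at key
  have h1 : d ⬝ᵥ -(Sum.elim (dP0.mulVec zs) (0 : (Fin mI ⊕ Fin mE) → ℝ))
      = -((d ∘ Sum.inl) ⬝ᵥ dP0.mulVec zs) := by
    rw [dotProduct_neg, dotProduct_comm, sum_dot_aux, dotProduct_comm]
  have h2 : -(Sum.elim g (0 : (Fin mI ⊕ Fin mE) → ℝ)) ⬝ᵥ x
      = -(g ⬝ᵥ (x ∘ Sum.inl)) := by
    rw [neg_dotProduct, sum_dot_aux]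
  rw [h1, h2] at key
  linarith
end

section
/- Let M ∈ ℝ^{(k+m_I+m_E)×(k+m_I+m_E)} be invertible, let g ∈ ℝ^k, z* ∈ ℝ^k, λ* ∈ ℝ^{m_E}, and define (d_z, d_ν, d_λ) = −(Mᵀ)⁻¹·(g, 0, 0). Then for all perturbation vectors dh_1, …, dh_{m_E} ∈ ℝ^k, if (dz, dν, dλ) is the unique solution of M·(dz, dν, dλ) = −(Σ_j λ_j*·dh_j, 0, ((dh_j)ᵀz*)_{j=1}^{m_E}), then gᵀdz = Σ_j (λ_j*·d_z + d_{λ_j}·z*)ᵀ dh_j. (This expresses the backward-pass formula ∇_{h_j}ℓ = λ_j*·d_z + z*·d_{λ_j} for the linear coefficients of the equality constraints.) -/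
open Matrix BigOperators

/-- Backward-pass formula for the linear coefficients `h_j` of the
equality constraints: with `(d_z, d_ν, d_λ) = −(Mᵀ)⁻¹·(g, 0, 0)`, if
`M·(dz, dν, dλ) = −(Σ_j λ_j*·dh_j, 0, ((dh_j)ᵀz*)_j)` then
`gᵀdz = Σ_j (λ_j*·d_z + d_{λ_j}·z*)ᵀ dh_j`. -/
theorem qcqp_backward_h {k mI mE : ℕ}
    (M : Matrix (Fin k ⊕ (Fin mI ⊕ Fin mE)) (Fin k ⊕ (Fin mI ⊕ Fin mE)) ℝ)
    (hM : IsUnit M) (g : Fin k → ℝ) (zs : Fin k → ℝ) (lam : Fin mE → ℝ)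
    (d : (Fin k ⊕ (Fin mI ⊕ Fin mE)) → ℝ)
    (hd : d = -(Mᵀ)⁻¹.mulVec (Sum.elim g (0 : (Fin mI ⊕ Fin mE) → ℝ)))
    (dh : Fin mE → Fin k → ℝ)
    (x : (Fin k ⊕ (Fin mI ⊕ Fin mE)) → ℝ)
    (hx : M.mulVec x = -(Sum.elim (∑ j, lam j • dh j)
      (Sum.elim (0 : Fin mI → ℝ) (fun j => dh j ⬝ᵥ zs)))) :
    g ⬝ᵥ (x ∘ Sum.inl) =
      ∑ j, (lam j • (d ∘ Sum.inl) + d (Sum.inr (Sum.inr j)) • zs) ⬝ᵥ dh j := by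
  have hdet : IsUnit Mᵀ.det := by
    rw [Matrix.det_transpose]
    exact (Matrix.isUnit_iff_isUnit_det M).mp hM
  have hMd : Mᵀ.mulVec d = -(Sum.elim g (0 : (Fin mI ⊕ Fin mE) → ℝ)) := by
    rw [hd, Matrix.mulVec_neg, Matrix.mulVec_mulVec, Matrix.mul_nonsing_inv _ hdet,
      Matrix.one_mulVec]
  have h1 : g ⬝ᵥ (x ∘ Sum.inl) = Sum.elim g (0 : (Fin mI ⊕ Fin mE) → ℝ) ⬝ᵥ x := by
    simp [dotProduct, Fintype.sum_sum_type]
  have h2 : Sum.elim g (0 : (Fin mI ⊕ Fin mE) → ℝ) ⬝ᵥ x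
      = d ⬝ᵥ (Sum.elim (∑ j, lam j • dh j)
        (Sum.elim (0 : Fin mI → ℝ) (fun j => dh j ⬝ᵥ zs))) := by
    have : Sum.elim g (0 : (Fin mI ⊕ Fin mE) → ℝ) = -(Mᵀ.mulVec d) := by
      rw [hMd, neg_neg]
    rw [this, Matrix.mulVec_transpose, neg_dotProduct, ← Matrix.dotProduct_mulVec,
      hx, dotProduct_neg, neg_neg]
  rw [h1, h2]
  simp only [dotProduct, Fintype.sum_sum_type, Sum.elim_inl, Sum.elim_inr,
    Finset.sum_apply, Pi.smul_apply, smul_eq_mul, Pi.add_apply, Pi.zero_apply,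
    Finset.mul_sum, Finset.sum_mul, add_mul, Function.comp_apply]
  simp only [mul_zero, Finset.sum_const_zero, zero_add]
  rw [Finset.sum_comm, ← Finset.sum_add_distrib]
  refine Finset.sum_congr rfl fun j _ => ?_
  rw [← Finset.sum_add_distrib]
  refine Finset.sum_congr rfl fun i _ => ?_
  ring
end

section
/- Let M ∈ ℝ^{(k+m_I+m_E)×(k+m_I+m_E)} be invertible, let g ∈ ℝ^k, z* ∈ ℝ^k, λ* ∈ ℝ^{m_E}, and define (d_z, d_ν, d_λ) = −(Mᵀ)⁻¹·(g, 0, 0). Then for all matrices dD_1, …, dD_{m_E} ∈ ℝ^{k×k}, if (dz, dν, dλ) is the unique solution of M·(dz, dν, dλ) = −(Σ_j λ_j*·dD_j·z*, 0, ((1/2)·z*ᵀdD_jz*)_{j=1}^{m_E}), then gᵀdz = Σ_j (λ_j*·d_zᵀdD_jz* + (1/2)·d_{λ_j}·z*ᵀdD_jz*). (This expresses the backward-pass formula ∇_{D_j}ℓ = λ_j*·d_z·z*ᵀ + (1/2)·d_{λ_j}·z*·z*ᵀ for the quadratic matrices of the equality constraints.) -/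
open Matrix BigOperators

/-- Backward-pass formula for the quadratic matrices `D_j` of the
equality constraints: with `(d_z, d_ν, d_λ) = −(Mᵀ)⁻¹·(g, 0, 0)`, if
`M·(dz, dν, dλ) = −(Σ_j λ_j*·dD_j·z*, 0, ((1/2)·z*ᵀdD_jz*)_j)` then
`gᵀdz = Σ_j (λ_j*·d_zᵀdD_jz* + (1/2)·d_{λ_j}·z*ᵀdD_jz*)`. -/
theorem qcqp_backward_D {k mI mE : ℕ}
    (M : Matrix (Fin k ⊕ (Fin mI ⊕ Fin mE)) (Fin k ⊕ (Fin mI ⊕ Fin mE)) ℝ)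
    (hM : IsUnit M) (g : Fin k → ℝ) (zs : Fin k → ℝ) (lam : Fin mE → ℝ)
    (d : (Fin k ⊕ (Fin mI ⊕ Fin mE)) → ℝ)
    (hd : d = -(Mᵀ)⁻¹.mulVec (Sum.elim g (0 : (Fin mI ⊕ Fin mE) → ℝ)))
    (dD : Fin mE → Matrix (Fin k) (Fin k) ℝ)
    (x : (Fin k ⊕ (Fin mI ⊕ Fin mE)) → ℝ)
    (hx : M.mulVec x = -(Sum.elim (∑ j, lam j • (dD j).mulVec zs)
      (Sum.elim (0 : Fin mI → ℝ) (fun j => (1 / 2) * (zs ⬝ᵥ (dD j).mulVec zs))))) :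
    g ⬝ᵥ (x ∘ Sum.inl) =
      ∑ j, (lam j * ((d ∘ Sum.inl) ⬝ᵥ (dD j).mulVec zs)
        + (1 / 2) * d (Sum.inr (Sum.inr j)) * (zs ⬝ᵥ (dD j).mulVec zs)) := by
  have hMT : IsUnit Mᵀ := by
    rw [Matrix.isUnit_iff_isUnit_det, Matrix.det_transpose,
      ← Matrix.isUnit_iff_isUnit_det]; exact hM
  have hMd : Mᵀ.mulVec d = -(Sum.elim g (0 : (Fin mI ⊕ Fin mE) → ℝ)) := by
    rw [hd, Matrix.mulVec_neg, Matrix.mulVec_mulVec,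
      Matrix.mul_nonsing_inv _ ((Matrix.isUnit_iff_isUnit_det _).mp hMT), Matrix.one_mulVec]
  -- g ⬝ (x ∘ inl) = (g,0) ⬝ x
  have h1 : g ⬝ᵥ (x ∘ Sum.inl) = Sum.elim g (0 : (Fin mI ⊕ Fin mE) → ℝ) ⬝ᵥ x := by
    simp [dotProduct, Fintype.sum_sum_type]
  have h2 : Sum.elim g (0 : (Fin mI ⊕ Fin mE) → ℝ) ⬝ᵥ x = d ⬝ᵥ (-(M.mulVec x)) := by
    rw [← neg_neg (Sum.elim g (0 : (Fin mI ⊕ Fin mE) → ℝ)), ← hMd,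
      dotProduct_neg, neg_dotProduct,
      Matrix.dotProduct_mulVec, ← Matrix.mulVec_transpose]
  rw [h1, h2, hx, neg_neg]
  simp only [dotProduct, Fintype.sum_sum_type, Sum.elim_inl, Sum.elim_inr,
    Pi.zero_apply, mul_zero, Finset.sum_const_zero, zero_add]
  rw [Finset.sum_add_distrib]
  congr 1
  · simp only [Finset.sum_apply, Pi.smul_apply, smul_eq_mul, dotProduct,
      Finset.mul_sum, Function.comp]
    rw [Finset.sum_comm]
    exact Finset.sum_congr rfl fun j _ => Finset.sum_congr rfl fun i _ => by ring
  · congr 1; ext j; ring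
end

section
/- Let M ∈ ℝ^{(k+m_I+m_E)×(k+m_I+m_E)} be invertible, let g ∈ ℝ^k, z* ∈ ℝ^k, ν* ∈ ℝ^{m_I}, and define (d_z, d_ν, d_λ) = −(Mᵀ)⁻¹·(g, 0, 0). Then for all perturbation vectors dq_1, …, dq_{m_I} ∈ ℝ^k, if (dz, dν, dλ) is the unique solution of M·(dz, dν, dλ) = −(Σ_i ν_i*·dq_i, (ν_i*·(dq_i)ᵀz*)_{i=1}^{m_I}, 0), then gᵀdz = Σ_i ν_i*·(d_zᵀdq_i + d_{ν_i}·(dq_i)ᵀz*). (This is the backward-pass formula for the linear coefficients q_i of the inequality constraints.) -/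
open Matrix BigOperators

/-- Backward-pass formula for the linear coefficients `q_i` of the
inequality constraints: with `(d_z, d_ν, d_λ) = −(Mᵀ)⁻¹·(g, 0, 0)`, if
`M·(dz, dν, dλ) = −(Σ_i ν_i*·dq_i, (ν_i*·(dq_i)ᵀz*)_i, 0)` then
`gᵀdz = Σ_i ν_i*·(d_zᵀdq_i + d_{ν_i}·(dq_i)ᵀz*)`. -/
theorem qcqp_backward_q {k mI mE : ℕ}
    (M : Matrix (Fin k ⊕ (Fin mI ⊕ Fin mE)) (Fin k ⊕ (Fin mI ⊕ Fin mE)) ℝ)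
    (hM : IsUnit M) (g : Fin k → ℝ) (zs : Fin k → ℝ) (ν : Fin mI → ℝ)
    (d : (Fin k ⊕ (Fin mI ⊕ Fin mE)) → ℝ)
    (hd : d = -(Mᵀ)⁻¹.mulVec (Sum.elim g (0 : (Fin mI ⊕ Fin mE) → ℝ)))
    (dq : Fin mI → Fin k → ℝ)
    (x : (Fin k ⊕ (Fin mI ⊕ Fin mE)) → ℝ)
    (hx : M.mulVec x = -(Sum.elim (∑ i, ν i • dq i)
      (Sum.elim (fun i => ν i * (dq i ⬝ᵥ zs)) (0 : Fin mE → ℝ)))) :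
    g ⬝ᵥ (x ∘ Sum.inl) =
      ∑ i, ν i * ((d ∘ Sum.inl) ⬝ᵥ dq i + d (Sum.inr (Sum.inl i)) * (dq i ⬝ᵥ zs)) := by
  set b : (Fin k ⊕ (Fin mI ⊕ Fin mE)) → ℝ := Sum.elim g 0 with hb
  have hMt : IsUnit Mᵀ.det := by
    rw [Matrix.det_transpose]
    exact (Matrix.isUnit_iff_isUnit_det M).mp hM
  have hMd : Mᵀ.mulVec d = -b := by
    rw [hd, Matrix.mulVec_neg, Matrix.mulVec_mulVec, Matrix.mul_nonsing_inv _ hMt,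
      Matrix.one_mulVec]
  have key : b ⬝ᵥ x = d ⬝ᵥ (Sum.elim (∑ i, ν i • dq i)
      (Sum.elim (fun i => ν i * (dq i ⬝ᵥ zs)) (0 : Fin mE → ℝ))) := by
    have : b ⬝ᵥ x = -(Mᵀ.mulVec d) ⬝ᵥ x := by rw [hMd, neg_neg]
    rw [this, Matrix.mulVec_transpose, neg_dotProduct,
      ← Matrix.dotProduct_mulVec, hx, dotProduct_neg, neg_neg]
  have hbx : g ⬝ᵥ (x ∘ Sum.inl) = b ⬝ᵥ x := by
    simp [hb, dotProduct, Fintype.sum_sum_type]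
  rw [hbx, key]
  simp only [dotProduct, Fintype.sum_sum_type, Sum.elim_inl, Sum.elim_inr,
    Finset.sum_apply, Pi.smul_apply, smul_eq_mul, Pi.zero_apply, mul_zero,
    Finset.sum_const_zero, add_zero, Function.comp_apply]
  simp only [Finset.mul_sum]
  rw [Finset.sum_comm, ← Finset.sum_add_distrib]
  refine Finset.sum_congr rfl fun i _ => ?_
  rw [mul_add, Finset.mul_sum, Finset.mul_sum]
  congr 1
  · exact Finset.sum_congr rfl fun j _ => by ring
  · exact Finset.sum_congr rfl fun j _ => by ring
end

section
/- Let M ∈ ℝ^{(k+m_I+m_E)×(k+m_I+m_E)} be invertible, let g ∈ ℝ^k, ν* ∈ ℝ^{m_I}, and define (d_z, d_ν, d_λ) = −(Mᵀ)⁻¹·(g, 0, 0). Then for every dr ∈ ℝ^{m_I}, if (dz, dν, dλ) is the unique solution of M·(dz, dν, dλ) = −(0, (ν_i*·dr_i)_{i=1}^{m_I}, 0), then gᵀdz = Σ_i ν_i*·d_{ν_i}·dr_i. (This is the backward-pass formula for the constant terms r_i of the inequality constraints.) -/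
open Matrix BigOperators

/-- Backward-pass formula for the constant terms `r_i` of the inequality
constraints: with `(d_z, d_ν, d_λ) = −(Mᵀ)⁻¹·(g, 0, 0)`, if
`M·(dz, dν, dλ) = −(0, (ν_i*·dr_i)_i, 0)` then `gᵀdz = Σ_i ν_i*·d_{ν_i}·dr_i`. -/
theorem qcqp_backward_r {k mI mE : ℕ}
    (M : Matrix (Fin k ⊕ (Fin mI ⊕ Fin mE)) (Fin k ⊕ (Fin mI ⊕ Fin mE)) ℝ)
    (hM : IsUnit M) (g : Fin k → ℝ) (ν : Fin mI → ℝ)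
    (d : (Fin k ⊕ (Fin mI ⊕ Fin mE)) → ℝ)
    (hd : d = -(Mᵀ)⁻¹.mulVec (Sum.elim g (0 : (Fin mI ⊕ Fin mE) → ℝ)))
    (dr : Fin mI → ℝ)
    (x : (Fin k ⊕ (Fin mI ⊕ Fin mE)) → ℝ)
    (hx : M.mulVec x = -(Sum.elim (0 : Fin k → ℝ)
      (Sum.elim (fun i => ν i * dr i) (0 : Fin mE → ℝ)))) :
    g ⬝ᵥ (x ∘ Sum.inl) = ∑ i, ν i * d (Sum.inr (Sum.inl i)) * dr i := by
  set u : (Fin k ⊕ (Fin mI ⊕ Fin mE)) → ℝ := Sum.elim g 0 with hu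
  have hMT : IsUnit Mᵀ := (Matrix.isUnit_transpose M).mpr hM
  have hud : Mᵀ.mulVec d = -u := by
    rw [hd, Matrix.mulVec_neg, Matrix.mulVec_mulVec,
      Matrix.mul_nonsing_inv _ ((Matrix.isUnit_iff_isUnit_det _).mp hMT),
      Matrix.one_mulVec]
  have h1 : g ⬝ᵥ (x ∘ Sum.inl) = u ⬝ᵥ x := by
    simp [dotProduct, Fintype.sum_sum_type, hu]
  have h2 : u ⬝ᵥ x = d ⬝ᵥ (Sum.elim (0 : Fin k → ℝ)
      (Sum.elim (fun i => ν i * dr i) (0 : Fin mE → ℝ))) := by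
    have := Matrix.dotProduct_mulVec d M x
    rw [hx, ← Matrix.mulVec_transpose, hud] at this
    simpa [dotProduct_neg, neg_dotProduct, neg_eq_iff_eq_neg] using this.symm
  rw [h1, h2]
  simp [dotProduct, Fintype.sum_sum_type]
  exact Finset.sum_congr rfl fun i _ => by ring
end
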